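/- arXiv:math/0603075 — 2 statements merged into one kernel-verified Lean document; each statement's English description precedes it below -/
import Mathlib

section
/- The sum of squares of all spherical harmonics of a fixed degree ℓ is constant on the sphere: Σ_{m=−ℓ}^{ℓ} (Y_ℓ^m(θ,φ))² = 2ℓ+1 for all θ ∈ [0,π], φ ∈ (−π,π]. -/
open MeasureTheory Real

noncomputable def legendreP (n : ℕ) : Polynomial ℝ :=
  Polynomial.C ((2 ^ n * n.factorial : ℝ))⁻¹ *
    (Polynomial.derivative^[n] ((Polynomial.X ^ 2 - 1) ^ n))

noncomputable def assocP (n m : ℕ) (x : ℝ) : ℝ :=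
  (-1 : ℝ) ^ m * (1 - x ^ 2) ^ ((m : ℝ) / 2) *
    (Polynomial.derivative^[m] (legendreP n)).eval x

noncomputable def sphY (ℓ : ℕ) (m : ℤ) (θ φ : ℝ) : ℝ :=
  if m = 0 then Real.sqrt (2 * ℓ + 1) * assocP ℓ 0 (Real.cos θ)
  else if 0 < m then
    Real.sqrt (2 * (2 * ℓ + 1) * ((ℓ - m.toNat).factorial : ℝ) / ((ℓ + m.toNat).factorial : ℝ)) *
      assocP ℓ m.toNat (Real.cos θ) * Real.cos ((m : ℝ) * φ)
  else
    Real.sqrt (2 * (2 * ℓ + 1) * ((ℓ - (-m).toNat).factorial : ℝ) / ((ℓ + (-m).toNat).factorial : ℝ)) *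
      assocP ℓ (-m).toNat (Real.cos θ) * Real.sin (((-m : ℤ) : ℝ) * φ)

noncomputable def fvec (d : ℕ) (j : Fin ((d + 1) ^ 2)) (θ φ : ℝ) : ℝ :=
  sphY (Nat.sqrt j) ((j : ℤ) - (Nat.sqrt j : ℤ) ^ 2 - (Nat.sqrt j : ℤ)) θ φ

noncomputable def infoMat (d : ℕ) (ξ : Measure (ℝ × ℝ)) :
    Matrix (Fin ((d + 1) ^ 2)) (Fin ((d + 1) ^ 2)) ℝ :=
  fun i j => ∫ z, fvec d i z.1 z.2 * fvec d j z.1 z.2 ∂ξ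

noncomputable def unifSphere : Measure (ℝ × ℝ) :=
  ((volume.restrict (Set.Icc 0 π)).withDensity
      (fun θ => ENNReal.ofReal (Real.sin θ / (4 * π)))).prod
    (volume.restrict (Set.Ioc (-π) π))


section SphYAux
open Polynomial

noncomputable def QQ (ℓ m : ℕ) : Polynomial ℝ := derivative^[m] (legendreP ℓ)

lemma QQ_succ (ℓ m : ℕ) : QQ ℓ (m + 1) = derivative (QQ ℓ m) := by
  simp [QQ, Function.iterate_succ_apply']

lemma natDegree_legendreP_le (ℓ : ℕ) : (legendreP ℓ).natDegree ≤ ℓ := by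
  have h0 : (X ^ 2 - 1 : ℝ[X]).natDegree = 2 := by
    have : (X ^ 2 - 1 : ℝ[X]) = X ^ 2 - C 1 := by simp
    rw [this, natDegree_X_pow_sub_C]
  have h1 : ((X ^ 2 - 1 : ℝ[X]) ^ ℓ).natDegree ≤ 2 * ℓ := by
    apply (natDegree_pow_le).trans
    rw [h0]; omega
  have h2 := natDegree_iterate_derivative ((X ^ 2 - 1 : ℝ[X]) ^ ℓ) ℓ
  calc (legendreP ℓ).natDegree
      ≤ (C ((2 ^ ℓ * ℓ.factorial : ℝ))⁻¹).natDegree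
        + ((derivative^[ℓ] ((X ^ 2 - 1 : ℝ[X]) ^ ℓ))).natDegree := natDegree_mul_le
    _ ≤ ℓ := by rw [natDegree_C]; omega

lemma QQ_top (ℓ : ℕ) : QQ ℓ (ℓ + 1) = 0 := by
  apply iterate_derivative_eq_zero
  exact Nat.lt_succ_of_le (natDegree_legendreP_le ℓ)

lemma iter_deriv_X_mul (z : ℝ[X]) (j : ℕ) :
    derivative^[j + 1] (X * z)
      = X * derivative^[j + 1] z + ((j : ℝ[X]) + 1) * derivative^[j] z := by
  have hD : ∀ k, derivative (derivative^[k] z) = derivative^[k + 1] z := fun k =>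
    (Function.iterate_succ_apply' derivative k z).symm
  induction j with
  | zero => simp [mul_comm]
  | succ i ih =>
    rw [Function.iterate_succ_apply', ih]
    simp only [derivative_add, derivative_mul, derivative_X, derivative_C, derivative_one,
      derivative_natCast, derivative_ofNat, hD]
    simp only [show i + 1 + 1 = i + 2 from rfl]
    push_cast
    ring

lemma deriv_v_mul (z : ℝ[X]) :
    derivative ((X ^ 2 - 1) * z) = (X ^ 2 - 1) * derivative z + 2 * X * z := by
  simp only [derivative_mul, derivative_sub, derivative_pow, derivative_X, derivative_one,
    C_eq_natCast, map_ofNat, Nat.cast_ofNat]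
  ring

lemma iter_deriv_v_mul (z : ℝ[X]) (j : ℕ) :
    derivative^[j + 2] ((X ^ 2 - 1) * z)
      = (X ^ 2 - 1) * derivative^[j + 2] z + (2 * ((j : ℝ[X]) + 2)) * X * derivative^[j + 1] z
        + (((j : ℝ[X]) + 1) * ((j : ℝ[X]) + 2)) * derivative^[j] z := by
  have hD : ∀ k, derivative (derivative^[k] z) = derivative^[k + 1] z := fun k =>
    (Function.iterate_succ_apply' derivative k z).symm
  induction j with
  | zero =>
    have h : derivative^[2] ((X ^ 2 - 1) * z) = derivative (derivative ((X ^ 2 - 1) * z)) := by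
      simp [Function.iterate_succ_apply']
    have h1 : derivative z = derivative^[1] z := rfl
    rw [h, deriv_v_mul]
    simp only [derivative_add, derivative_mul, derivative_sub, derivative_pow, derivative_X,
      derivative_C, derivative_one, derivative_natCast, derivative_ofNat, C_eq_natCast, map_ofNat,
      Nat.cast_ofNat, h1, hD]
    simp only [Function.iterate_zero_apply]
    push_cast
    ring
  | succ i ih =>
    rw [Function.iterate_succ_apply', ih]
    simp only [derivative_add, derivative_mul, derivative_sub, derivative_pow, derivative_X,
      derivative_C, derivative_one, derivative_natCast, derivative_ofNat, C_eq_natCast, map_ofNat,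
      Nat.cast_ofNat, hD]
    simp only [show i + 2 + 1 = i + 3 from rfl, show i + 1 + 1 = i + 2 from rfl,
      show i + 1 + 2 = i + 3 from rfl]
    push_cast
    ring

lemma pell (ℓ : ℕ) :
    (X ^ 2 - 1) * derivative ((X ^ 2 - 1 : ℝ[X]) ^ ℓ)
      = ((2 * ℓ : ℕ) : ℝ[X]) * (X * (X ^ 2 - 1) ^ ℓ) := by
  cases ℓ with
  | zero => simp
  | succ n =>
    rw [derivative_pow]
    simp only [derivative_sub, derivative_pow, derivative_X, derivative_one, C_eq_natCast,
      map_ofNat, Nat.cast_ofNat]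
    push_cast
    ring

lemma QQ_eq (ℓ m : ℕ) :
    QQ ℓ m = C ((2 ^ ℓ * ℓ.factorial : ℝ))⁻¹ * derivative^[ℓ + m] ((X ^ 2 - 1) ^ ℓ) := by
  rw [QQ, legendreP, Polynomial.iterate_derivative_C_mul, ← Function.iterate_add_apply,
    Nat.add_comm]

lemma ode (ℓ : ℕ) :
    (X ^ 2 - 1) * QQ ℓ 2 + 2 * X * QQ ℓ 1 = ((ℓ : ℝ[X]) * ((ℓ : ℝ[X]) + 1)) * QQ ℓ 0 := by
  cases ℓ with
  | zero =>
    have h1 : QQ 0 1 = 0 := QQ_top 0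
    have h2 : QQ 0 2 = 0 := by rw [show 2 = 1 + 1 from rfl, QQ_succ, h1]; simp
    simp [h1, h2]
  | succ k =>
    have hy : ∀ j, derivative^[j] (derivative ((X ^ 2 - 1 : ℝ[X]) ^ (k+1)))
        = derivative^[j + 1] ((X ^ 2 - 1 : ℝ[X]) ^ (k+1)) := fun j =>
      (Function.iterate_succ_apply derivative j _).symm
    have key := congrArg (fun p => derivative^[k + 2] p) (pell (k + 1))
    simp only [iter_deriv_v_mul _ k, Polynomial.iterate_derivative_natCast_mul,
      iter_deriv_X_mul _ (k + 1), hy] at key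
    rw [QQ_eq (k+1) 2, QQ_eq (k+1) 1, QQ_eq (k+1) 0]
    simp only [show k + 1 + 2 = k + 3 from rfl, show k + 1 + 1 = k + 2 from rfl,
      show k + 2 + 1 = k + 3 from rfl, show k + 1 + 0 = k + 1 from rfl] at key ⊢
    push_cast at key ⊢
    linear_combination (C ((2 ^ (k+1) * (k+1).factorial : ℝ))⁻¹) * key

lemma QQrec (ℓ m : ℕ) :
    (X ^ 2 - 1) * QQ ℓ (m + 2) + (2 * ((m : ℝ[X]) + 1)) * X * QQ ℓ (m + 1)
      = ((ℓ : ℝ[X]) * ((ℓ : ℝ[X]) + 1) - (m : ℝ[X]) * ((m : ℝ[X]) + 1)) * QQ ℓ m := by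
  induction m with
  | zero => simpa using ode ℓ
  | succ i ih =>
    have key := congrArg derivative ih
    simp only [derivative_mul, derivative_add, derivative_sub, derivative_pow, derivative_X,
      derivative_one, derivative_natCast, derivative_ofNat, map_ofNat, C_eq_natCast,
      Nat.cast_ofNat, ← QQ_succ] at key
    simp only [show i + 2 + 1 = i + 3 from rfl, show i + 1 + 1 = i + 2 from rfl,
      show i + 1 + 2 = i + 3 from rfl, show i + 0 + 1 = i + 1 from rfl] at key ⊢
    push_cast at key ⊢
    linear_combination key

lemma eval_one_iterate (n : ℕ) : ∀ g : ℝ[X],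
    (derivative^[n] ((X - 1) ^ n * g)).eval 1 = n.factorial * g.eval 1 := by
  induction n with
  | zero => intro g; simp
  | succ n ih =>
    intro g
    rw [Function.iterate_succ_apply]
    have hd : derivative ((X - 1 : ℝ[X]) ^ (n + 1) * g)
        = (X - 1) ^ n * (((n : ℝ[X]) + 1) * g + (X - 1) * derivative g) := by
      rw [derivative_mul, derivative_pow]
      simp only [derivative_sub, derivative_X, derivative_one, C_eq_natCast, map_ofNat,
        Nat.cast_ofNat, sub_zero, mul_one]
      push_cast
      ring
    rw [hd, ih]
    simp [Nat.factorial_succ]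
    push_cast
    ring

lemma eval_one_legendreP (ℓ : ℕ) : (legendreP ℓ).eval 1 = 1 := by
  have h : ((X : ℝ[X]) ^ 2 - 1) ^ ℓ = (X - 1) ^ ℓ * (X + 1) ^ ℓ := by
    rw [← mul_pow]; ring_nf
  rw [legendreP, eval_mul, eval_C, h, eval_one_iterate]
  simp only [eval_pow, eval_add, eval_X, eval_one]
  rw [show (1 : ℝ) + 1 = 2 from by norm_num]
  have h2 : (2 : ℝ) ^ ℓ ≠ 0 := by positivity
  have h3 : (ℓ.factorial : ℝ) ≠ 0 := Nat.cast_ne_zero.mpr ℓ.factorial_ne_zero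
  field_simp

noncomputable def aa (ℓ m : ℕ) : ℝ := ((ℓ - m).factorial : ℝ) / ((ℓ + m).factorial : ℝ)

lemma aa_zero (ℓ : ℕ) : aa ℓ 0 = 1 := by
  simp [aa, div_self, Nat.cast_ne_zero.mpr ℓ.factorial_ne_zero]

lemma aa_rel (ℓ i : ℕ) (h : i < ℓ) :
    aa ℓ (i + 1) * ((ℓ : ℝ) * ((ℓ : ℝ) + 1) - (i : ℝ) * ((i : ℝ) + 1)) = aa ℓ i := by
  unfold aa
  have h1 : ℓ - i = (ℓ - (i + 1)) + 1 := by omega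
  have h2 : ℓ + (i + 1) = (ℓ + i) + 1 := by omega
  rw [h1, h2, Nat.factorial_succ, Nat.factorial_succ]
  have hl : ((ℓ - (i + 1) : ℕ) : ℝ) = (ℓ : ℝ) - (i : ℝ) - 1 := by
    have : ((ℓ - (i + 1) : ℕ) : ℝ) = (ℓ : ℝ) - ((i + 1 : ℕ) : ℝ) := by
      rw [Nat.cast_sub h]
    rw [this]; push_cast; ring
  have ha : ((ℓ - (i + 1)).factorial : ℝ) ≠ 0 := Nat.cast_ne_zero.mpr (Nat.factorial_ne_zero _)
  have hb : (((ℓ + i)).factorial : ℝ) ≠ 0 := Nat.cast_ne_zero.mpr (Nat.factorial_ne_zero _)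
  have hc : ((ℓ + i : ℕ) : ℝ) + 1 ≠ 0 := by positivity
  push_cast
  rw [hl]
  field_simp
  ring

noncomputable def tt (ℓ m : ℕ) : ℝ[X] :=
  C (if m = 0 then 1 else 2 * aa ℓ m) * (1 - X ^ 2) ^ m * QQ ℓ m ^ 2

noncomputable def BB (ℓ m : ℕ) : ℝ[X] :=
  C (2 * aa ℓ m) * (1 - X ^ 2) ^ m * (QQ ℓ m * QQ ℓ (m + 1))

noncomputable def SS (ℓ : ℕ) : ℝ[X] := ∑ m ∈ Finset.range (ℓ + 1), tt ℓ m

lemma deriv_tt_zero (ℓ : ℕ) : derivative (tt ℓ 0) = BB ℓ 0 := by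
  unfold tt BB
  simp only [aa_zero, mul_one, reduceIte, pow_zero, one_mul, map_one, derivative_pow,
    ← QQ_succ, C_eq_natCast, map_ofNat, Nat.cast_ofNat]
  ring

lemma deriv_tt (ℓ i : ℕ) (h : i < ℓ) :
    derivative (tt ℓ (i + 1)) = BB ℓ (i + 1) - BB ℓ i := by
  have hrec := QQrec ℓ i
  have hC : C (aa ℓ (i + 1)) * ((ℓ : ℝ[X]) * ((ℓ : ℝ[X]) + 1) - (i : ℝ[X]) * ((i : ℝ[X]) + 1))
      = C (aa ℓ i) := by
    have := congrArg C (aa_rel ℓ i h)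
    simpa [map_mul, map_sub, map_add, map_one, map_natCast] using this
  unfold tt BB
  rw [if_neg (Nat.succ_ne_zero i)]
  simp only [derivative_mul, derivative_pow, derivative_C, derivative_sub, derivative_one,
    derivative_X, derivative_natCast, derivative_ofNat, ← QQ_succ, map_mul, map_ofNat,
    C_eq_natCast, Nat.cast_ofNat]
  simp only [show i + 1 + 1 = i + 2 from rfl, show i + 1 - 1 = i from rfl]
  push_cast
  linear_combination (-(2 * C (aa ℓ (i + 1))) * (1 - X ^ 2) ^ i * QQ ℓ (i + 1)) * hrec +
    (-2 * (1 - X ^ 2) ^ i * QQ ℓ i * QQ ℓ (i + 1)) * hC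

lemma deriv_SS (ℓ : ℕ) : derivative (SS ℓ) = 0 := by
  unfold SS
  rw [derivative_sum, Finset.sum_range_succ']
  rw [Finset.sum_congr rfl (fun i hi => deriv_tt ℓ i (Finset.mem_range.mp hi)),
    Finset.sum_range_sub (BB ℓ), deriv_tt_zero]
  have hz : BB ℓ ℓ = 0 := by
    unfold BB
    rw [QQ_top]
    ring
  rw [hz]
  ring

lemma SS_eval (ℓ : ℕ) (x : ℝ) : (SS ℓ).eval x = 1 := by
  have h := Polynomial.eq_C_of_derivative_eq_zero (deriv_SS ℓ)
  have e1 : (SS ℓ).eval 1 = 1 := by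
    unfold SS
    rw [eval_finset_sum]
    rw [Finset.sum_eq_single 0]
    · unfold tt
      simp [QQ, eval_one_legendreP]
    · intro m _ hm
      unfold tt
      obtain ⟨k, rfl⟩ := Nat.exists_eq_succ_of_ne_zero hm
      simp [eval_pow]
    · intro hmem
      exact absurd (Finset.mem_range.mpr (Nat.succ_pos ℓ)) hmem
  rw [h, eval_C] at e1 ⊢
  exact e1

lemma sum_Icc_neg (n : ℕ) (f : ℤ → ℝ) :
    ∑ m ∈ Finset.Icc (-(n : ℤ)) (n : ℤ), f m
      = f 0 + ∑ m ∈ Finset.range n, (f ((m : ℤ) + 1) + f (-((m : ℤ) + 1))) := by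
  induction n with
  | zero => simp
  | succ k ih =>
    have hset : Finset.Icc (-((k : ℤ) + 1)) ((k : ℤ) + 1)
        = insert (-((k : ℤ) + 1)) (insert ((k : ℤ) + 1) (Finset.Icc (-(k : ℤ)) (k : ℤ))) := by
      ext z
      simp only [Finset.mem_Icc, Finset.mem_insert]
      omega
    have h1 : ((k : ℤ) + 1) ∉ Finset.Icc (-(k : ℤ)) (k : ℤ) := by
      simp only [Finset.mem_Icc]; omega
    have h2 : (-((k : ℤ) + 1)) ∉ insert ((k : ℤ) + 1) (Finset.Icc (-(k : ℤ)) (k : ℤ)) := by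
      simp only [Finset.mem_insert, Finset.mem_Icc]; omega
    push_cast
    rw [hset, Finset.sum_insert h2, Finset.sum_insert h1, ih, Finset.sum_range_succ]
    push_cast
    ring

lemma assocP_sq (n m : ℕ) (x : ℝ) (hx : x ^ 2 ≤ 1) :
    (assocP n m x) ^ 2 = (1 - x ^ 2) ^ m * ((QQ n m).eval x) ^ 2 := by
  unfold assocP
  have h0 : (0 : ℝ) ≤ 1 - x ^ 2 := by linarith
  have key : ((1 - x ^ 2) ^ ((m : ℝ) / 2)) ^ (2 : ℕ) = (1 - x ^ 2) ^ m := by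
    rw [← Real.rpow_natCast ((1 - x ^ 2) ^ ((m : ℝ) / 2)) 2, ← Real.rpow_mul h0]
    norm_num
  have hm1 : ((-1 : ℝ) ^ m) ^ (2 : ℕ) = 1 := by
    rw [← pow_mul, mul_comm, pow_mul]
    norm_num
  rw [mul_pow, mul_pow, key, hm1, one_mul]
  rfl

end SphYAux

/-- The sum of squares of all real spherical harmonics of fixed degree `ℓ`
is constant on the sphere: `∑_{m=-ℓ}^{ℓ} (Y_ℓ^m(θ,φ))² = 2ℓ+1`. -/
theorem sum_sq_sphY_eq (ℓ : ℕ) (θ φ : ℝ) (hθ : θ ∈ Set.Icc (0 : ℝ) π)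
    (hφ : φ ∈ Set.Ioc (-π) π) :
    ∑ m ∈ Finset.Icc (-(ℓ : ℤ)) (ℓ : ℤ), (sphY ℓ m θ φ) ^ 2 = 2 * ℓ + 1 := by
  set x := Real.cos θ with hxdef
  have hx : x ^ 2 ≤ 1 := by
    have h1 := Real.neg_one_le_cos θ
    have h2 := Real.cos_le_one θ
    nlinarith
  have hzero : sphY ℓ 0 θ φ ^ 2 = (2 * ℓ + 1) * ((1 - x ^ 2) ^ (0 : ℕ) * ((QQ ℓ 0).eval x) ^ 2) := by
    rw [sphY, if_pos rfl, mul_pow, Real.sq_sqrt (by positivity), assocP_sq ℓ 0 x hx]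
  have hpair : ∀ m ∈ Finset.range ℓ,
      sphY ℓ ((m : ℤ) + 1) θ φ ^ 2 + sphY ℓ (-((m : ℤ) + 1)) θ φ ^ 2
        = (2 * ℓ + 1) * (2 * aa ℓ (m + 1) * ((1 - x ^ 2) ^ (m + 1) * ((QQ ℓ (m + 1)).eval x) ^ 2)) := by
    intro m hm
    have e1 : ((m : ℤ) + 1) ≠ 0 := by omega
    have e2 : (0 : ℤ) < (m : ℤ) + 1 := by omega
    have e3 : ((m : ℤ) + 1).toNat = m + 1 := by omega
    have e4 : (-((m : ℤ) + 1)) ≠ 0 := by omega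
    have e5 : ¬ ((0 : ℤ) < -((m : ℤ) + 1)) := by omega
    have e6 : (-(-((m : ℤ) + 1))).toNat = m + 1 := by omega
    have e7 : ((-(-((m : ℤ) + 1)) : ℤ) : ℝ) = ((m : ℤ) + 1 : ℤ) := by push_cast; ring
    rw [sphY, if_neg e1, if_pos e2, e3, sphY, if_neg e4, if_neg e5, e6, e7]
    have hc : (0 : ℝ) ≤ 2 * (2 * ℓ + 1) * ((ℓ - (m + 1)).factorial : ℝ) / ((ℓ + (m + 1)).factorial : ℝ) := by
      positivity
    have hring : ∀ s A c2 s2 : ℝ,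
        (s * A * c2) ^ 2 + (s * A * s2) ^ 2 = s ^ 2 * A ^ 2 * (s2 ^ 2 + c2 ^ 2) := by
      intro s A c2 s2; ring
    rw [hring, Real.sin_sq_add_cos_sq, Real.sq_sqrt hc, assocP_sq ℓ (m + 1) x hx, mul_one]
    unfold aa
    ring
  have hS := SS_eval ℓ x
  have hexp : (SS ℓ).eval x
      = (1 - x ^ 2) ^ (0 : ℕ) * ((QQ ℓ 0).eval x) ^ 2
        + ∑ m ∈ Finset.range ℓ,
            2 * aa ℓ (m + 1) * ((1 - x ^ 2) ^ (m + 1) * ((QQ ℓ (m + 1)).eval x) ^ 2) := by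
    unfold SS
    rw [Polynomial.eval_finset_sum, Finset.sum_range_succ']
    unfold tt
    simp only [Polynomial.eval_mul, Polynomial.eval_pow, Polynomial.eval_C, Polynomial.eval_sub, Polynomial.eval_one, Polynomial.eval_X, Nat.succ_ne_zero,
      if_false, if_true, reduceIte]
    rw [add_comm]
    congr 1
    · ring
    · exact Finset.sum_congr rfl fun i _ => by ring
  rw [sum_Icc_neg ℓ (fun m => sphY ℓ m θ φ ^ 2)]
  rw [hzero, Finset.sum_congr rfl hpair, ← Finset.mul_sum, ← mul_add, ← hexp, hS, mul_one]
end

section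
/- If z* = arccos|x_1*| where x_1* is the smallest zero of the Legendre polynomial P_{d+1}, then for any z > z* there is no probability measure ξ supported on [z, π−z] × (−π,π] whose information matrix in the spherical harmonic regression model of degree d equals I_{(d+1)²}. -/
/-!
If `M(ξ) = I`, the zonal entries of the information matrix say that the image `μ` of `ξ` under
`(θ, φ) ↦ cos θ` integrates every product `P_k P_l` (`k, l ≤ d`) like `dx / 2` on `[-1, 1]`.
These products span the polynomials of degree `≤ 2d`, so `μ` is a quadrature of degree `2d`.
Its nodes lie in `[-cos z, cos z]`, while by parity `m := -x₁ = |x₁|` is a zero of `P_{d+1}`,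
and `cos z < m`. Writing `P_{d+1} = (m² - X²) R`, the polynomial `(m² - x²) R² = R P_{d+1}` has
degree `2d` and vanishing `dx`-integral by orthogonality, so its `μ`-integral vanishes; but on the
nodes it is at least `(m - cos z)² R²`, whose `μ`-integral is `(m - cos z)² ∫ R² dx / 2 > 0`.
-/

open MeasureTheory Real

open Polynomial Set

lemma natDegree_X_sq_sub_one_pow (n : ℕ) : ((X ^ 2 - 1 : ℝ[X]) ^ n).natDegree = 2 * n := by
  have h : (X ^ 2 - 1 : ℝ[X]).natDegree = 2 := by compute_degree!
  rw [natDegree_pow, h, mul_comm]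

lemma coeff_X_sq_sub_one_pow_two_mul (n : ℕ) : ((X ^ 2 - 1 : ℝ[X]) ^ n).coeff (2 * n) = 1 := by
  rw [← natDegree_X_sq_sub_one_pow]
  exact ((monic_X_pow_sub_C (1 : ℝ) two_ne_zero).pow n).coeff_natDegree

lemma degree_legendreP (n : ℕ) : (legendreP n).degree = n := by
  have hcoeff : (derivative^[n] ((X ^ 2 - 1 : ℝ[X]) ^ n)).coeff n ≠ 0 := by
    rw [coeff_iterate_derivative, ← two_mul, coeff_X_sq_sub_one_pow_two_mul]
    simp [Nat.descFactorial_eq_zero_iff_lt, two_mul]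
  have hle : (derivative^[n] ((X ^ 2 - 1 : ℝ[X]) ^ n)).natDegree ≤ n := by
    have := natDegree_iterate_derivative ((X ^ 2 - 1 : ℝ[X]) ^ n) n
    rw [natDegree_X_sq_sub_one_pow] at this
    omega
  rw [legendreP, degree_C_mul (by positivity),
    degree_eq_of_le_of_coeff_ne_zero (degree_le_of_natDegree_le hle) hcoeff]

lemma natDegree_legendreP (n : ℕ) : (legendreP n).natDegree = n :=
  natDegree_eq_of_degree_eq_some (degree_legendreP n)

lemma legendreP_ne_zero (n : ℕ) : legendreP n ≠ 0 :=
  ne_zero_of_degree_gt (n := ⊥) (by rw [degree_legendreP]; exact WithBot.bot_lt_coe n)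

lemma iterate_derivative_X_sq_sub_one_pow_comp_neg_X (n k : ℕ) :
    (derivative^[k] ((X ^ 2 - 1 : ℝ[X]) ^ n)).comp (-X) =
      C ((-1) ^ k) * derivative^[k] ((X ^ 2 - 1 : ℝ[X]) ^ n) := by
  induction k with
  | zero => simp [sub_comp, pow_comp]
  | succ k ih =>
    have h := congrArg derivative ih
    rw [derivative_comp, derivative_neg, derivative_X, derivative_C_mul] at h
    rw [Function.iterate_succ_apply', pow_succ (-1 : ℝ), C_mul, C_neg, C_1]
    linear_combination -h

lemma legendreP_eval_neg (n : ℕ) (x : ℝ) :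
    (legendreP n).eval (-x) = (-1) ^ n * (legendreP n).eval x := by
  have h := congrArg (eval x) (iterate_derivative_X_sq_sub_one_pow_comp_neg_X n n)
  simp only [eval_comp, eval_neg, eval_X, eval_mul, eval_C] at h
  simp only [legendreP, eval_mul, eval_C, h]
  ring

lemma integral_eval_mul_iterate_derivative_eval {f : ℝ[X]} {a b : ℝ} {k : ℕ}
    (hf : ∀ j < k, (derivative^[j] f).eval a = 0 ∧ (derivative^[j] f).eval b = 0) (q : ℝ[X]) :
    ∫ x in a..b, q.eval x * (derivative^[k] f).eval x =
      (-1) ^ k * ∫ x in a..b, (derivative^[k] q).eval x * f.eval x := by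
  induction k generalizing q with
  | zero => simp
  | succ k ih =>
    obtain ⟨hfa, hfb⟩ := hf k k.lt_succ_self
    rw [Function.iterate_succ_apply', intervalIntegral.integral_mul_deriv_eq_deriv_mul
        (fun x _ => q.hasDerivAt x) (fun x _ => (derivative^[k] f).hasDerivAt x)
        ((derivative q).continuous.intervalIntegrable _ _)
        ((derivative _).continuous.intervalIntegrable _ _),
      hfa, hfb, ih (fun j hj => hf j (by omega)), ← Function.iterate_succ_apply]
    ring

lemma iterate_derivative_X_sq_sub_one_pow_eval_eq_zero {n j : ℕ} (hj : j < n) {x : ℝ}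
    (hx : x ^ 2 = 1) : (derivative^[j] ((X ^ 2 - 1 : ℝ[X]) ^ n)).eval x = 0 := by
  obtain ⟨T, hT⟩ := pow_sub_dvd_iterate_derivative_pow (X ^ 2 - 1 : ℝ[X]) n j
  rw [hT, eval_mul, eval_pow]
  simp [hx, zero_pow (Nat.sub_ne_zero_of_lt hj)]

lemma integral_eval_mul_legendreP (n : ℕ) (q : ℝ[X]) :
    ∫ x in (-1)..1, q.eval x * (legendreP n).eval x =
      (-1) ^ n / (2 ^ n * n.factorial) *
        ∫ x in (-1)..1, (derivative^[n] q).eval x * (x ^ 2 - 1) ^ n := by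
  have hbdry : ∀ j < n, (derivative^[j] ((X ^ 2 - 1 : ℝ[X]) ^ n)).eval (-1) = 0 ∧
      (derivative^[j] ((X ^ 2 - 1 : ℝ[X]) ^ n)).eval 1 = 0 := fun j hj =>
    ⟨iterate_derivative_X_sq_sub_one_pow_eval_eq_zero hj (by norm_num),
      iterate_derivative_X_sq_sub_one_pow_eval_eq_zero hj (by norm_num)⟩
  simp only [legendreP, eval_mul, eval_C, mul_left_comm _ (_⁻¹ : ℝ)]
  rw [intervalIntegral.integral_const_mul, integral_eval_mul_iterate_derivative_eval hbdry]
  simp only [eval_pow, eval_sub, eval_X, eval_one]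
  ring

lemma integral_eval_mul_legendreP_eq_zero {n : ℕ} {q : ℝ[X]} (hq : q.natDegree < n) :
    ∫ x in (-1)..1, q.eval x * (legendreP n).eval x = 0 := by
  simp [integral_eval_mul_legendreP, iterate_derivative_eq_zero hq]

lemma iterate_derivative_two_mul_X_sq_sub_one_pow (n : ℕ) :
    derivative^[2 * n] ((X ^ 2 - 1 : ℝ[X]) ^ n) = C ((2 * n).factorial : ℝ) := by
  have hdeg : (derivative^[2 * n] ((X ^ 2 - 1 : ℝ[X]) ^ n)).natDegree ≤ 0 := by
    have := natDegree_iterate_derivative ((X ^ 2 - 1 : ℝ[X]) ^ n) (2 * n)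
    rwa [natDegree_X_sq_sub_one_pow, Nat.sub_self] at this
  rw [eq_C_of_natDegree_le_zero hdeg, coeff_iterate_derivative, zero_add,
    coeff_X_sq_sub_one_pow_two_mul, Nat.descFactorial_self, nsmul_one]

lemma iterate_derivative_legendreP_self (n : ℕ) :
    derivative^[n] (legendreP n) = C ((2 * n).factorial / (2 ^ n * n.factorial) : ℝ) := by
  rw [legendreP, iterate_derivative_C_mul, ← Function.iterate_add_apply, ← two_mul,
    iterate_derivative_two_mul_X_sq_sub_one_pow, ← C_mul, div_eq_inv_mul]

lemma integral_X_sq_sub_one_pow_succ (n : ℕ) :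
    ∫ x in (-1 : ℝ)..1, (x ^ 2 - 1 : ℝ) ^ (n + 1) =
      -(2 * n + 2 : ℝ) / (2 * n + 3) * ∫ x in (-1 : ℝ)..1, (x ^ 2 - 1 : ℝ) ^ n := by
  have hderiv : ∀ x : ℝ, HasDerivAt (fun x => x * (x ^ 2 - 1) ^ (n + 1))
      ((2 * n + 3) * (x ^ 2 - 1) ^ (n + 1) + (2 * n + 2) * (x ^ 2 - 1) ^ n) x := by
    intro x
    refine ((hasDerivAt_id' x).fun_mul
      (((hasDerivAt_pow 2 x).sub_const 1).fun_pow (n + 1))).congr_deriv ?_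
    simp only [Nat.add_sub_cancel]
    push_cast
    ring
  have hftc := intervalIntegral.integral_eq_sub_of_hasDerivAt (a := -1) (b := 1)
    (fun x _ => hderiv x) (by apply Continuous.intervalIntegrable; fun_prop)
  rw [intervalIntegral.integral_add (by apply Continuous.intervalIntegrable; fun_prop)
      (by apply Continuous.intervalIntegrable; fun_prop),
    intervalIntegral.integral_const_mul, intervalIntegral.integral_const_mul] at hftc
  norm_num at hftc
  field_simp
  linarith

lemma integral_X_sq_sub_one_pow (n : ℕ) :
    ∫ x in (-1 : ℝ)..1, (x ^ 2 - 1 : ℝ) ^ n =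
      (-1 : ℝ) ^ n * 2 ^ (2 * n + 1) * n.factorial ^ 2 / (2 * n + 1).factorial := by
  induction n with
  | zero => norm_num
  | succ n ih =>
    rw [integral_X_sq_sub_one_pow_succ, ih, show 2 * (n + 1) + 1 = 2 * n + 1 + 1 + 1 by ring,
      Nat.factorial_succ (2 * n + 1 + 1), Nat.factorial_succ (2 * n + 1), Nat.factorial_succ n]
    push_cast
    field_simp
    ring

lemma integral_legendreP_mul_self (n : ℕ) :
    ∫ x in (-1)..1, (legendreP n).eval x * (legendreP n).eval x = 2 / (2 * n + 1) := by
  rw [integral_eval_mul_legendreP, iterate_derivative_legendreP_self]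
  simp only [eval_C]
  rw [intervalIntegral.integral_const_mul, integral_X_sq_sub_one_pow,
    show 2 * n + 1 = (2 * n).succ from rfl, Nat.factorial_succ]
  push_cast
  field_simp
  rw [← pow_mul, ← pow_mul, mul_comm n 2, pow_mul, neg_one_sq, one_pow, pow_succ]
  ring

lemma integral_legendreP_mul_legendreP (k l : ℕ) :
    ∫ x in (-1)..1, (legendreP k).eval x * (legendreP l).eval x =
      if k = l then 2 / (2 * k + 1 : ℝ) else 0 := by
  rcases lt_trichotomy k l with hkl | rfl | hkl
  · rw [if_neg hkl.ne, integral_eval_mul_legendreP_eq_zero (by rwa [natDegree_legendreP])]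
  · rw [if_pos rfl, integral_legendreP_mul_self]
  · rw [if_neg hkl.ne']
    simp_rw [mul_comm ((legendreP k).eval _)]
    exact integral_eval_mul_legendreP_eq_zero (by rwa [natDegree_legendreP])

lemma integral_eval_sq_pos {R : ℝ[X]} (hR : R ≠ 0) {a b : ℝ} (hab : a < b) :
    0 < ∫ x in a..b, R.eval x ^ 2 := by
  refine intervalIntegral.integral_pos hab (by fun_prop) (fun x _ => sq_nonneg _) ?_
  by_contra! hzero
  refine hR (eq_zero_of_infinite_isRoot R ((Icc_infinite hab).mono fun x hx => ?_))
  exact pow_eq_zero_iff two_ne_zero |>.mp (le_antisymm (hzero x hx) (sq_nonneg _))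

lemma Continuous.integrable_of_ae_mem_Icc {μ : Measure ℝ} [IsFiniteMeasure μ] {a b : ℝ}
    (h : ∀ᵐ x ∂μ, x ∈ Icc a b) {f : ℝ → ℝ} (hf : Continuous f) :
    Integrable f μ := by
  rw [← Measure.restrict_eq_self_of_ae_mem h]
  exact hf.continuousOn.integrableOn_compact isCompact_Icc

def IsQuadrature (μ : Measure ℝ) (n : ℕ) : Prop :=
  ∀ p : ℝ[X], p.natDegree ≤ n → ∫ x, p.eval x ∂μ = (∫ x in (-1)..1, p.eval x) / 2

/-- For `e ≤ 2 * d` both indices of the product are at most `d`. -/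
noncomputable def legendreProductSeq (d : ℕ) : Polynomial.Sequence ℝ where
  elems' e := legendreP (min d e) * legendreP (e - min d e)
  degree_eq' e := by
    rw [degree_mul, degree_legendreP, degree_legendreP, ← Nat.cast_add,
      Nat.add_sub_cancel' (min_le_right d e)]

theorem isQuadrature_of_integral_legendreP_mul {μ : Measure ℝ} {d : ℕ}
    (hμ : ∀ p : ℝ[X], Integrable (fun x => p.eval x) μ)
    (h : ∀ k ≤ d, ∀ l ≤ d, ∫ x, (legendreP k).eval x * (legendreP l).eval x ∂μ =
      (∫ x in (-1)..1, (legendreP k).eval x * (legendreP l).eval x) / 2) :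
    IsQuadrature μ (2 * d) := by
  intro p hp
  have hspan : p ∈ Submodule.span ℝ (legendreProductSeq d '' Iic (2 * d)) := by
    rw [(legendreProductSeq d).span_degreeLE fun e _ =>
      (leadingCoeff_ne_zero.mpr ((legendreProductSeq d).ne_zero e)).isUnit, mem_degreeLE]
    exact degree_le_of_natDegree_le hp
  clear hp
  induction hspan using Submodule.span_induction with
  | mem q hq =>
    obtain ⟨e, he, rfl⟩ := hq
    simpa [legendreProductSeq] using h _ (min_le_left _ _) _ (by grind)
  | zero => simp
  | add q r _ _ hq hr =>
    simp only [eval_add]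
    rw [integral_add (hμ q) (hμ r), intervalIntegral.integral_add
      (q.continuous.intervalIntegrable _ _) (r.continuous.intervalIntegrable _ _), hq, hr]
    ring
  | smul c q _ hq =>
    simp only [eval_smul, smul_eq_mul]
    rw [integral_const_mul, intervalIntegral.integral_const_mul, hq]
    ring

lemma exists_legendreP_eq_mul_of_eval_eq_zero {d : ℕ} {m : ℝ} (hm : m ≠ 0)
    (hroot : (legendreP (d + 1)).eval m = 0) :
    ∃ R : ℝ[X], legendreP (d + 1) = (C (m ^ 2) - X ^ 2) * R ∧ R.natDegree + 1 = d := by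
  have hroot' : (legendreP (d + 1)).eval (-m) = 0 := by rw [legendreP_eval_neg, hroot, mul_zero]
  obtain ⟨Q, hQ⟩ := dvd_iff_isRoot.mpr (show (legendreP (d + 1)).IsRoot m from hroot)
  have hQroot : Q.IsRoot (-m) := by
    rw [hQ, eval_mul, eval_sub, eval_X, eval_C] at hroot'
    exact (mul_eq_zero.mp hroot').resolve_left fun h => hm (by linarith)
  obtain ⟨R, hR⟩ := dvd_iff_isRoot.mpr hQroot
  have hPR : legendreP (d + 1) = (C (m ^ 2) - X ^ 2) * -R := by
    rw [hQ, hR, C_neg, C_pow]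
    ring
  refine ⟨-R, hPR, ?_⟩
  have hR0 : -R ≠ 0 := fun h => legendreP_ne_zero _ (by rw [hPR, h, mul_zero])
  have hquad : (C (m ^ 2) - X ^ 2 : ℝ[X]).natDegree = 2 := by compute_degree!
  have hdeg := congrArg natDegree hPR
  rw [natDegree_legendreP, natDegree_mul (ne_zero_of_natDegree_gt (n := 0) (by omega)) hR0,
    hquad] at hdeg
  omega

theorem IsQuadrature.le_of_eval_legendreP_eq_zero {μ : Measure ℝ} [IsFiniteMeasure μ] {d : ℕ}
    (hμ : IsQuadrature μ (2 * d)) {c m : ℝ} (hc : ∀ᵐ x ∂μ, x ∈ Icc (-c) c) (hm : 0 < m)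
    (hroot : (legendreP (d + 1)).eval m = 0) : m ≤ c := by
  by_contra! hcm
  obtain ⟨R, hPR, hdeg⟩ := exists_legendreP_eq_mul_of_eval_eq_zero hm.ne' hroot
  have hR0 : R ≠ 0 := fun h => legendreP_ne_zero _ (by rw [hPR, h, mul_zero])
  have hvanish : ∫ x, (m ^ 2 - x ^ 2) * R.eval x ^ 2 ∂μ = 0 := calc
    _ = ∫ x, (R * legendreP (d + 1)).eval x ∂μ := by
      congr 1 with x
      rw [hPR]
      simp only [eval_mul, eval_sub, eval_C, eval_pow, eval_X]
      ring
    _ = 0 := by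
      rw [hμ _ (natDegree_mul_le.trans (by rw [natDegree_legendreP]; omega))]
      simp only [eval_mul]
      rw [integral_eval_mul_legendreP_eq_zero (by omega), zero_div]
  have hpos : 0 < ∫ x, R.eval x ^ 2 ∂μ := by
    have := hμ (R ^ 2) (natDegree_pow_le.trans (by omega))
    simp only [eval_pow] at this
    rw [this]
    exact half_pos (integral_eval_sq_pos hR0 (by norm_num))
  have hgap : ∀ᵐ x ∂μ, (m - c) ^ 2 * R.eval x ^ 2 ≤ (m ^ 2 - x ^ 2) * R.eval x ^ 2 := by
    filter_upwards [hc] with x hx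
    exact mul_le_mul_of_nonneg_right (by nlinarith [hx.1, hx.2]) (sq_nonneg _)
  have hmono := integral_mono_ae (Continuous.integrable_of_ae_mem_Icc hc (by fun_prop))
    (Continuous.integrable_of_ae_mem_Icc hc (by fun_prop)) hgap
  rw [integral_const_mul, hvanish] at hmono
  nlinarith [pow_pos (sub_pos.mpr hcm) 2]

lemma fvec_zonal {d k : ℕ} (hk : k * k + k < (d + 1) ^ 2) (θ φ : ℝ) :
    fvec d ⟨k * k + k, hk⟩ θ φ = √(2 * k + 1) * (legendreP k).eval (cos θ) := by
  have hsqrt : Nat.sqrt (k * k + k) = k := Nat.sqrt_add_eq k (Nat.le_add_right k k)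
  have horder : ((k * k + k : ℕ) : ℤ) - (k : ℤ) ^ 2 - k = 0 := by push_cast; ring
  simp only [fvec, hsqrt, horder, sphY, if_pos, assocP]
  simp

lemma integral_legendreP_cos_mul_of_infoMat_eq_one {d : ℕ} {ξ : Measure (ℝ × ℝ)}
    (hI : infoMat d ξ = 1) {k l : ℕ} (hk : k ≤ d) (hl : l ≤ d) :
    ∫ w, (legendreP k).eval (cos w.1) * (legendreP l).eval (cos w.1) ∂ξ =
      if k = l then 1 / (2 * k + 1 : ℝ) else 0 := by
  have hidx : ∀ j ≤ d, j * j + j < (d + 1) ^ 2 := fun j hj => by nlinarith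
  have hentry := congrFun (congrFun hI ⟨k * k + k, hidx k hk⟩) ⟨l * l + l, hidx l hl⟩
  have hscale : √(2 * k + 1) * √(2 * l + 1) *
      ∫ w, (legendreP k).eval (cos w.1) * (legendreP l).eval (cos w.1) ∂ξ =
      ∫ w, √(2 * k + 1) * (legendreP k).eval (cos w.1) *
        (√(2 * l + 1) * (legendreP l).eval (cos w.1)) ∂ξ := by
    rw [← integral_const_mul]
    congr 1 with w
    ring
  have hinj : k * k + k = l * l + l ↔ k = l := ⟨fun h => by nlinarith, fun h => h ▸ rfl⟩
  simp only [infoMat, fvec_zonal, Matrix.one_apply, Fin.mk.injEq, hinj] at hentry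
  rw [← hscale] at hentry
  split_ifs at hentry ⊢ with hkl
  · subst hkl
    rw [mul_self_sqrt (by positivity)] at hentry
    rw [eq_div_iff (by positivity), mul_comm, hentry]
  · exact (mul_eq_zero.mp hentry).resolve_left (by positivity)

theorem isQuadrature_map_cos_of_infoMat_eq_one {d : ℕ} {ξ : Measure (ℝ × ℝ)}
    [IsFiniteMeasure ξ] (hI : infoMat d ξ = 1) :
    IsQuadrature (ξ.map fun w => cos w.1) (2 * d) := by
  have hmeas : Measurable fun w : ℝ × ℝ => cos w.1 := by fun_prop
  have hcos : ∀ᵐ x ∂(ξ.map fun w => cos w.1), x ∈ Icc (-1) 1 :=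
    (ae_map_iff hmeas.aemeasurable measurableSet_Icc).mpr
      (ae_of_all _ fun w => ⟨neg_one_le_cos w.1, cos_le_one w.1⟩)
  refine isQuadrature_of_integral_legendreP_mul
    (fun p => Continuous.integrable_of_ae_mem_Icc hcos p.continuous) fun k hk l hl => ?_
  rw [integral_map hmeas.aemeasurable (by fun_prop : Continuous _).aestronglyMeasurable,
    integral_legendreP_cos_mul_of_infoMat_eq_one hI hk hl, integral_legendreP_mul_legendreP]
  split_ifs <;> ring

lemma abs_cos_le_cos_of_mem_Icc {z θ : ℝ} (hz : 0 ≤ z) (hθ : θ ∈ Icc z (π - z)) :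
    |cos θ| ≤ cos z := by
  refine abs_le.mpr ⟨?_, cos_le_cos_of_nonneg_of_le_pi hz (by linarith [hθ.2]) hθ.1⟩
  have := cos_le_cos_of_nonneg_of_le_pi (y := π - θ) hz (by linarith [hθ.1])
    (by linarith [hθ.2])
  rw [cos_pi_sub] at this
  linarith

lemma cos_lt_of_arccos_lt {x z : ℝ} (hz : arccos x < z) (hzπ : z ≤ π) : cos z < x := by
  rcases le_or_gt x 1 with hx1 | hx1
  · have hx : -1 ≤ x := by
      by_contra! h
      rw [arccos_of_le_neg_one h.le] at hz
      linarith
    calc cos z < cos (arccos x) := cos_lt_cos_of_nonneg_of_le_pi (arccos_nonneg x) hzπ hz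
      _ = x := cos_arccos hx hx1
  · exact (cos_le_one z).trans_lt hx1

/-- Theorem 3.6: let `x₁*` be the smallest zero of the Legendre polynomial `P_{d+1}` and
`z* = arccos |x₁*|`. If `z > z*`, then no probability design supported on
`[z, π - z] × (-π, π]` has identity information matrix in the spherical harmonic
regression model of degree `d`. -/
theorem no_design_on_shrunk_rectangle (d : ℕ) (x₁ : ℝ)
    (hx₁ : IsLeast {y : ℝ | (legendreP (d + 1)).eval y = 0} x₁)
    (z : ℝ) (hz : Real.arccos |x₁| < z)
    (ξ : Measure (ℝ × ℝ)) [IsProbabilityMeasure ξ]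
    (hsupp : ξ ((Set.Icc z (π - z) ×ˢ Set.Ioc (-π) π)ᶜ) = 0) :
    infoMat d ξ ≠ (1 : Matrix (Fin ((d + 1) ^ 2)) (Fin ((d + 1) ^ 2)) ℝ) := by
  intro hI
  have hrect : ∀ᵐ w ∂ξ, w ∈ Icc z (π - z) ×ˢ Ioc (-π) π := mem_ae_iff.mpr hsupp
  obtain ⟨w, hw, -⟩ := hrect.exists
  have hzπ : z ≤ π - z := hw.1.trans hw.2
  have hz0 : 0 ≤ z := (arccos_nonneg _).trans hz.le
  have hnodes : ∀ᵐ x ∂(ξ.map fun w => cos w.1), x ∈ Icc (-cos z) (cos z) :=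
    (ae_map_iff (by fun_prop) measurableSet_Icc).mpr
      (hrect.mono fun w hw => abs_le.mp (abs_cos_le_cos_of_mem_Icc hz0 hw.1))
  have hroot : (legendreP (d + 1)).eval (-x₁) = 0 := by
    rw [legendreP_eval_neg, hx₁.1, mul_zero]
  have habs : |x₁| = -x₁ := abs_of_nonpos (by linarith [hx₁.2 hroot])
  have hcos : cos z < -x₁ := habs ▸ cos_lt_of_arccos_lt hz (by linarith [pi_pos])
  have hcos0 : 0 ≤ cos z := cos_nonneg_of_mem_Icc ⟨by linarith [pi_pos], by linarith⟩
  have hle := (isQuadrature_map_cos_of_infoMat_eq_one hI).le_of_eval_legendreP_eq_zero hnodes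
    (hcos0.trans_lt hcos) hroot
  linarith
end
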